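/- Let n ≥ 1 and let K ⊂ ℂⁿ be compact. There exists a positive integer l depending only on K such that: if z ∈ K satisfies ω(z, 2^j) > 0 for all j and Σ_{j=1}^∞ 2^{−j} log(1/ω(z, 2^j)) = +∞ (i.e. z does not satisfy the Brjuno condition), then for every ε > 0, Σ_{k ∈ ℕ₀, |k| ≥ 1} Σ_{|p| ≤ l(|k|+1), p ∈ ℤ} |log |k·z − p|²|^{n+1+ε} / |k|^{n+1+ε/4} = +∞. -/

import Mathlib

open scoped BigOperators

/-- The index set `ℕ₀ = ⋃_{j=1}^n {k ∈ ℤⁿ : k_i ≥ 0 for i ≠ j, k_j ≥ −1}`. -/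
def brjunoIndexSet (n : ℕ) : Set (Fin n → ℤ) :=
  {k | ∃ j : Fin n, (∀ i, i ≠ j → 0 ≤ k i) ∧ -1 ≤ k j}

/-- `k·z = k₁z₁ + ⋯ + kₙzₙ`. -/
noncomputable def kdot {n : ℕ} (k : Fin n → ℤ) (z : Fin n → ℂ) : ℂ :=
  ∑ i, (k i : ℂ) * z i

/-- `ω(z, m) = min{ |k·z − p| : k ∈ ℕ₀, 1 ≤ |k| ≤ m, p ∈ ℤ }`. -/
noncomputable def brjunoOmega (n : ℕ) (z : Fin n → ℂ) (m : ℕ) : ℝ :=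
  sInf {x | ∃ k ∈ brjunoIndexSet n, ∃ p : ℤ,
    1 ≤ ∑ i, k i ∧ ∑ i, k i ≤ (m : ℤ) ∧ x = ‖kdot k z - (p : ℂ)‖}

/-!
If the double sum has finite value `M`, each of its terms is at most `M`. Let `C` bound the
coordinates on `K` and `l ≥ 6C`. For every `j`, a pair `(k, p)` with `1 ≤ |k| ≤ 2^(j+1)` and
`|k·z − p| < 2ω(z, 2^(j+1))` has `|p| ≤ l(|k| + 1)`, so it occurs in the sum, and bounding its
term by `M` gives `log (1/ω(z, 2^(j+1))) ≤ log 2 + (M^(1/s)/2)·2^((j+1)r/s)` with `s = n + 1 + ε`,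
`r = n + 1 + ε/4`, and `r/s < 1`. As `ω(z, 2^(j+1)) ≤ ω(z, 2)` as well, the Brjuno series is
dominated by a geometric series, so it converges.
-/

open Real
open scoped ENNReal

def brjunoValues (n : ℕ) (z : Fin n → ℂ) (m : ℕ) : Set ℝ :=
  {x | ∃ k ∈ brjunoIndexSet n, ∃ p : ℤ,
    1 ≤ ∑ i, k i ∧ ∑ i, k i ≤ (m : ℤ) ∧ x = ‖kdot k z - (p : ℂ)‖}

noncomputable def brjunoDoubleSum (n l : ℕ) (z : Fin n → ℂ) (s r : ℝ) : ℝ≥0∞ :=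
  ∑' x : {x : (Fin n → ℤ) × ℤ // x.1 ∈ brjunoIndexSet n ∧ 1 ≤ ∑ i, x.1 i ∧
      |x.2| ≤ (l : ℤ) * ((∑ i, x.1 i) + 1)},
    ENNReal.ofReal (|log (‖kdot x.1.1 z - (x.1.2 : ℂ)‖ ^ 2)| ^ s / ((∑ i, x.1.1 i : ℤ) : ℝ) ^ r)

section

variable {n : ℕ}

lemma brjunoOmega_eq_sInf (z : Fin n → ℂ) (m : ℕ) :
    brjunoOmega n z m = sInf (brjunoValues n z m) := rfl

lemma bddBelow_brjunoValues (z : Fin n → ℂ) (m : ℕ) : BddBelow (brjunoValues n z m) :=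
  ⟨0, by rintro _ ⟨k, -, p, -, -, rfl⟩; exact norm_nonneg _⟩

lemma brjunoValues_mono (z : Fin n → ℂ) {m m' : ℕ} (h : m ≤ m') :
    brjunoValues n z m ⊆ brjunoValues n z m' :=
  fun _ ⟨k, hk, p, h1, hm, hx⟩ => ⟨k, hk, p, h1, hm.trans (by exact_mod_cast h), hx⟩

lemma brjunoValues_nonempty_of_brjunoOmega_pos {z : Fin n → ℂ} {m : ℕ}
    (hω : 0 < brjunoOmega n z m) : (brjunoValues n z m).Nonempty := by
  by_contra h
  rw [Set.not_nonempty_iff_eq_empty] at h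
  rw [brjunoOmega_eq_sInf, h, Real.sInf_empty] at hω
  exact lt_irrefl 0 hω

lemma brjunoOmega_le {z : Fin n → ℂ} {m : ℕ} {k : Fin n → ℤ} (hk : k ∈ brjunoIndexSet n)
    (p : ℤ) (h1 : 1 ≤ ∑ i, k i) (hm : ∑ i, k i ≤ (m : ℤ)) :
    brjunoOmega n z m ≤ ‖kdot k z - (p : ℂ)‖ :=
  csInf_le (bddBelow_brjunoValues z m) ⟨k, hk, p, h1, hm, rfl⟩

lemma brjunoOmega_antitone {z : Fin n → ℂ} {m m' : ℕ} (hω : 0 < brjunoOmega n z m)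
    (h : m ≤ m') : brjunoOmega n z m' ≤ brjunoOmega n z m :=
  csInf_le_csInf (bddBelow_brjunoValues z m') (brjunoValues_nonempty_of_brjunoOmega_pos hω)
    (brjunoValues_mono z h)

lemma sum_abs_le_sum_add_two_of_mem_brjunoIndexSet {k : Fin n → ℤ}
    (hk : k ∈ brjunoIndexSet n) :
    ∑ i, |k i| ≤ ∑ i, k i + 2 := by
  obtain ⟨j, hpos, hj⟩ := hk
  have hpt : ∀ i, |k i| - k i ≤ if i = j then 2 else 0 := by
    intro i
    split_ifs with h
    · subst h; cases abs_cases (k i) <;> omega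
    · rw [abs_of_nonneg (hpos i h), sub_self]
  have := Finset.sum_le_sum fun i (_ : i ∈ Finset.univ) => hpt i
  rw [Finset.sum_sub_distrib, Finset.sum_ite_eq' Finset.univ j, if_pos (Finset.mem_univ j)] at this
  linarith

lemma norm_kdot_le {z : Fin n → ℂ} {C : ℝ} (hC : ∀ i, ‖z i‖ ≤ C) (k : Fin n → ℤ) :
    ‖kdot k z‖ ≤ ((∑ i, |k i| : ℤ) : ℝ) * C := by
  calc ‖kdot k z‖ ≤ ∑ i, ‖(k i : ℂ) * z i‖ := norm_sum_le _ _
    _ ≤ ∑ i, |(k i : ℝ)| * C := by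
        gcongr with i
        rw [norm_mul, Complex.norm_intCast]
        exact mul_le_mul_of_nonneg_left (hC i) (abs_nonneg _)
    _ = ((∑ i, |k i| : ℤ) : ℝ) * C := by push_cast; rw [Finset.sum_mul]

lemma exists_lt_two_mul_brjunoOmega {z : Fin n → ℂ} {C : ℝ} (hC0 : 0 ≤ C) (hC : ∀ i, ‖z i‖ ≤ C)
    {m : ℕ} (hω : 0 < brjunoOmega n z m) :
    ∃ k ∈ brjunoIndexSet n, ∃ p : ℤ, 1 ≤ ∑ i, k i ∧ ∑ i, k i ≤ (m : ℤ) ∧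
      |(p : ℝ)| ≤ 6 * C * ((∑ i, k i : ℤ) + 1) ∧
      ‖kdot k z - (p : ℂ)‖ < 2 * brjunoOmega n z m := by
  obtain ⟨_, ⟨k, hk, p, h1, hm, rfl⟩, hlt⟩ :=
    exists_lt_of_csInf_lt (brjunoValues_nonempty_of_brjunoOmega_pos hω)
      (by linarith : brjunoOmega n z m < 2 * brjunoOmega n z m)
  refine ⟨k, hk, p, h1, hm, ?_, hlt⟩
  -- `p = 0` is a competitor, so `|k·z − p| < 2|k·z|`, whence
  -- `|p| < 3|k·z| ≤ 3C(|k| + 2) ≤ 6C(|k| + 1)`.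
  have hzero : brjunoOmega n z m ≤ ‖kdot k z‖ := by
    simpa using brjunoOmega_le (z := z) hk 0 h1 hm
  have hkz : ‖kdot k z‖ ≤ ((∑ i, k i : ℤ) + 2) * C :=
    (norm_kdot_le hC k).trans <| mul_le_mul_of_nonneg_right
      (by exact_mod_cast sum_abs_le_sum_add_two_of_mem_brjunoIndexSet hk) hC0
  have hp : |(p : ℝ)| ≤ ‖kdot k z‖ + ‖kdot k z - (p : ℂ)‖ := by
    rw [← Complex.norm_intCast, norm_sub_rev]
    exact norm_le_norm_add_norm_sub' _ _
  have h1' : (1 : ℝ) ≤ (∑ i, k i : ℤ) := by exact_mod_cast h1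
  nlinarith

lemma abs_le_of_rpow_div_rpow_le {x d s r M : ℝ} (hd : 0 < d) (hs : 0 < s) (hM : 0 ≤ M)
    (h : |x| ^ s / d ^ r ≤ M) : |x| ≤ M ^ s⁻¹ * d ^ (r / s) := by
  rw [div_le_iff₀ (rpow_pos_of_pos hd r)] at h
  calc |x| = (|x| ^ s) ^ s⁻¹ := (rpow_rpow_inv (abs_nonneg x) hs.ne').symm
    _ ≤ (M * d ^ r) ^ s⁻¹ := by gcongr
    _ = M ^ s⁻¹ * d ^ (r / s) := by
      rw [mul_rpow hM (rpow_nonneg hd.le r), ← rpow_mul hd.le, div_eq_mul_inv]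

lemma log_one_div_le_of_lt_two_mul {ω v : ℝ} (hω : 0 < ω) (hv : v < 2 * ω) (hv0 : 0 < v) :
    log (1 / ω) ≤ log 2 + |log (v ^ 2)| / 2 := by
  have : log (1 / ω) ≤ log (2 / v) :=
    log_le_log (by positivity) (by rw [div_le_div_iff₀ hω hv0]; linarith)
  rw [log_div two_ne_zero hv0.ne', log_pow, abs_mul] at *
  have := neg_le_abs (log v)
  push_cast at *
  rw [abs_two]
  linarith

lemma term_le_toReal_brjunoDoubleSum {l : ℕ} {z : Fin n → ℂ} {s r : ℝ}
    (hS : brjunoDoubleSum n l z s r ≠ ⊤)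
    {k : Fin n → ℤ} (hk : k ∈ brjunoIndexSet n) {p : ℤ} (h1 : 1 ≤ ∑ i, k i)
    (hp : |p| ≤ (l : ℤ) * (∑ i, k i + 1)) :
    |log (‖kdot k z - (p : ℂ)‖ ^ 2)| ^ s / ((∑ i, k i : ℤ) : ℝ) ^ r ≤
      (brjunoDoubleSum n l z s r).toReal := by
  have hle := fun x => (ENNReal.ofReal_le_iff_le_toReal hS).1 (ENNReal.le_tsum x)
  exact hle ⟨(k, p), hk, h1, hp⟩

lemma log_one_div_brjunoOmega_le {z : Fin n → ℂ} {C : ℝ} (hC0 : 0 ≤ C) (hC : ∀ i, ‖z i‖ ≤ C)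
    {l : ℕ} (hl : 6 * C ≤ l) {s r : ℝ} (hs : 0 < s) (hr : 0 ≤ r)
    (hS : brjunoDoubleSum n l z s r ≠ ⊤)
    {m : ℕ} (hω : 0 < brjunoOmega n z m) :
    log (1 / brjunoOmega n z m) ≤
      log 2 + (brjunoDoubleSum n l z s r).toReal ^ s⁻¹ / 2 * (m : ℝ) ^ (r / s) := by
  obtain ⟨k, hk, p, h1, hm, hp, hlt⟩ := exists_lt_two_mul_brjunoOmega hC0 hC hω
  have h1' : (1 : ℝ) ≤ (∑ i, k i : ℤ) := by exact_mod_cast h1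
  have hpl : |p| ≤ (l : ℤ) * (∑ i, k i + 1) := by
    have : |(p : ℝ)| ≤ l * ((∑ i, k i : ℤ) + 1) := hp.trans (by gcongr)
    exact_mod_cast this
  have hv0 : 0 < ‖kdot k z - (p : ℂ)‖ := hω.trans_le (brjunoOmega_le hk p h1 hm)
  have hlog := abs_le_of_rpow_div_rpow_le (by linarith) hs ENNReal.toReal_nonneg
    (term_le_toReal_brjunoDoubleSum hS hk h1 hpl)
  have hkm : ((∑ i, k i : ℤ) : ℝ) ^ (r / s) ≤ (m : ℝ) ^ (r / s) := by
    gcongr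
    exact_mod_cast hm
  have := mul_le_mul_of_nonneg_left hkm
    (rpow_nonneg (ENNReal.toReal_nonneg (a := brjunoDoubleSum n l z s r)) s⁻¹)
  linarith [log_one_div_le_of_lt_two_mul hω hlt hv0]

lemma summable_two_rpow_neg_mul {a : ℕ → ℝ} {L A B θ : ℝ} (hθ : θ < 1)
    (hL : ∀ j, L ≤ a j) (hU : ∀ j, a j ≤ A + B * ((2 : ℝ) ^ (j + 1)) ^ θ) :
    Summable fun j : ℕ => (2 : ℝ) ^ (-((j : ℝ) + 1)) * a j := by
  set q : ℝ := 2 ^ θ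
  have hq0 : 0 ≤ q := by positivity
  have hq : q < 2 := by simpa using rpow_lt_rpow_of_exponent_lt one_lt_two hθ
  have htwo : ∀ j : ℕ, (2 : ℝ) ^ (-((j : ℝ) + 1)) = (1 / 2) ^ (j + 1) := fun j => by
    rw [rpow_neg zero_le_two, ← Nat.cast_add_one, rpow_natCast, one_div, inv_pow]
  have hgeom : ∀ x : ℝ, 0 ≤ x → x < 1 → Summable fun j : ℕ => x ^ (j + 1) := fun x h0 h1 =>
    (summable_nat_add_iff 1).2 (summable_geometric_of_lt_one h0 h1)
  have hsum := ((hgeom (1 / 2) (by norm_num) (by norm_num)).mul_left (|L| + |A|)).add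
    ((hgeom (q / 2) (by positivity) (by linarith)).mul_left |B|)
  refine hsum.of_norm_bounded fun j => ?_
  have hqj : 0 ≤ q ^ (j + 1) := pow_nonneg hq0 _
  have ha : |a j| ≤ |L| + |A| + |B| * q ^ (j + 1) := by
    have hUj := hU j
    rw [← rpow_pow_comm zero_le_two] at hUj
    have := mul_le_mul_of_nonneg_right (le_abs_self B) hqj
    rw [abs_le]
    constructor <;> linarith [hL j, neg_abs_le L, le_abs_self A, abs_nonneg A,
      abs_nonneg L, mul_nonneg (abs_nonneg B) hqj]
  rw [Real.norm_eq_abs, htwo, abs_mul, abs_of_nonneg (by positivity)]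
  calc (1 / 2) ^ (j + 1) * |a j| ≤ (1 / 2) ^ (j + 1) * (|L| + |A| + |B| * q ^ (j + 1)) := by
        gcongr
    _ = (|L| + |A|) * (1 / 2) ^ (j + 1) + |B| * (q / 2) ^ (j + 1) := by
      rw [div_pow, div_pow]; ring

end

theorem brjuno_nonBrjuno_double_sum_infinite_general (n : ℕ)
    (K : Set (EuclideanSpace ℂ (Fin n))) (hK : IsCompact K) :
    ∃ l : ℕ, 0 < l ∧ ∀ z ∈ K,
      (∀ j : ℕ, 1 ≤ j → 0 < brjunoOmega n (fun i => z i) (2 ^ j)) →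
      ¬ Summable (fun j : ℕ =>
        (2:ℝ) ^ (-((j:ℝ) + 1)) * Real.log (1 / brjunoOmega n (fun i => z i) (2 ^ (j + 1)))) →
      ∀ ε : ℝ, 0 < ε →
        ∑' x : {x : (Fin n → ℤ) × ℤ // x.1 ∈ brjunoIndexSet n ∧ 1 ≤ ∑ i, x.1 i ∧
            |x.2| ≤ (l : ℤ) * ((∑ i, x.1 i) + 1)},
          ENNReal.ofReal
            (|Real.log ((‖kdot x.1.1 (fun i => z i) - (x.1.2 : ℂ)‖) ^ 2)|
                ^ ((n:ℝ) + 1 + ε)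
              / ((∑ i, x.1.1 i : ℤ) : ℝ) ^ ((n:ℝ) + 1 + ε/4)) = ⊤ := by
  obtain ⟨C, hC0, hC⟩ := hK.isBounded.exists_pos_norm_le
  refine ⟨⌈6 * C⌉₊ + 1, Nat.succ_pos _, fun z hz hω hns ε hε => ?_⟩
  have hl : 6 * C ≤ ((⌈6 * C⌉₊ + 1 : ℕ) : ℝ) := by push_cast; linarith [Nat.le_ceil (6 * C)]
  have hzC : ∀ i, ‖z i‖ ≤ C := fun i => (PiLp.norm_apply_le z i).trans (hC z hz)
  have hs : 0 < (n : ℝ) + 1 + ε := by positivity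
  have hrs : ((n : ℝ) + 1 + ε / 4) / (n + 1 + ε) < 1 := by rw [div_lt_one hs]; linarith
  by_contra hS
  have hL : ∀ j : ℕ, log (1 / brjunoOmega n (fun i => z i) (2 ^ 1)) ≤
      log (1 / brjunoOmega n (fun i => z i) (2 ^ (j + 1))) := fun j =>
    log_le_log (one_div_pos.2 (hω 1 le_rfl)) <| one_div_le_one_div_of_le (hω _ le_add_self) <|
      brjunoOmega_antitone (hω 1 le_rfl) (Nat.pow_le_pow_right two_pos le_add_self)
  have hU := fun j : ℕ => log_one_div_brjunoOmega_le (z := fun i => z i) hC0.le hzC hl hs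
    (by positivity) hS (hω (j + 1) le_add_self)
  push_cast at hU
  exact hns (summable_two_rpow_neg_mul hrs hL hU)

theorem brjuno_nonBrjuno_double_sum_infinite (n : ℕ) (hn : 1 ≤ n)
    (K : Set (EuclideanSpace ℂ (Fin n))) (hK : IsCompact K) :
    ∃ l : ℕ, 0 < l ∧ ∀ z ∈ K,
      (∀ j : ℕ, 1 ≤ j → 0 < brjunoOmega n (fun i => z i) (2 ^ j)) →
      ¬ Summable (fun j : ℕ =>
        (2:ℝ) ^ (-((j:ℝ) + 1)) * Real.log (1 / brjunoOmega n (fun i => z i) (2 ^ (j + 1)))) →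
      ∀ ε : ℝ, 0 < ε →
        ∑' x : {x : (Fin n → ℤ) × ℤ // x.1 ∈ brjunoIndexSet n ∧ 1 ≤ ∑ i, x.1 i ∧
            |x.2| ≤ (l : ℤ) * ((∑ i, x.1 i) + 1)},
          ENNReal.ofReal
            (|Real.log ((‖kdot x.1.1 (fun i => z i) - (x.1.2 : ℂ)‖) ^ 2)|
                ^ ((n:ℝ) + 1 + ε)
              / ((∑ i, x.1.1 i : ℤ) : ℝ) ^ ((n:ℝ) + 1 + ε/4)) = ⊤ :=
  brjuno_nonBrjuno_double_sum_infinite_general n K hK
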